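/- Let R be a ring, S a monoid, and ω : S → End(R) a monoid homomorphism into the monoid of ring endomorphisms of R. Assume R is S-compatible (i.e., for every s ∈ S and all a, b ∈ R one has a b = 0 if and only if a ω_s(b) = 0), abelian, and semi-regular with J(R) nilpotent. Then for every maximal right ideal M of R, every s ∈ S, and all a, b ∈ R: a b ∈ M if and only if a ω_s(b) ∈ M. The same holds for every maximal left ideal M of R. -/

import Mathlib

/-- A ring is *abelian* if every idempotent is central. -/
def IsAbelianRing (R : Type*) [Ring R] : Prop :=
  ∀ e : R, IsIdempotentElem e → ∀ a : R, e * a = a * e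

/-- A ring `R` is *semi-regular* if `R/J(R)` is von Neumann regular (for every `a` there is
`b` with `a - a*b*a ∈ J(R)`) and idempotents lift modulo the Jacobson radical `J(R)`. -/
def IsSemiregularRing (R : Type*) [Ring R] : Prop :=
  (∀ a : R, ∃ b : R, a - a * b * a ∈ (⊥ : Ideal R).jacobson) ∧
  ∀ a : R, a * a - a ∈ (⊥ : Ideal R).jacobson →
    ∃ e : R, IsIdempotentElem e ∧ e - a ∈ (⊥ : Ideal R).jacobson

/-- The Jacobson radical `J(R)` is nilpotent: there is `n > 0` such that every product of `n`
elements of `J(R)` vanishes (i.e. `J(R)^n = 0`). -/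
def JacobsonNilpotent (R : Type*) [Ring R] : Prop :=
  ∃ n : ℕ, 0 < n ∧ ∀ l : List R, l.length = n →
    (∀ x ∈ l, x ∈ (⊥ : Ideal R).jacobson) → l.prod = 0

/-!
Modulo `J(R)` the ring is abelian von Neumann regular, so every `x` satisfies `x ≡ e * x = x * e`
for a central idempotent `e ∈ R * x + J(R)`; hence a left ideal containing `J(R)` contains `x`
iff it contains `e`. A compatible endomorphism fixes idempotents, and it preserves `J(R)` because
`J(R)` is nil while every nilpotent of `R` lies in `J(R)`; so it preserves membership in such
ideals. Maximal left ideals are completely prime (`a * b ∈ M ↔ a ∈ M ∨ b ∈ M`), which settles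
products. Maximal right ideals are maximal left ideals of `Rᵐᵒᵖ`, and all hypotheses pass to
`Rᵐᵒᵖ` since `J(R)` is left–right symmetric (`x ∈ J(R)` iff every `1 - y * x` is a unit iff
every `1 - x * y` is a unit).
-/

open MulOpposite

def JacobsonNil (A : Type*) [Ring A] : Prop :=
  ∀ x ∈ (⊥ : Ideal A).jacobson, IsNilpotent x

section

variable {A : Type*} [Ring A]

theorem JacobsonNilpotent.jacobsonNil (h : JacobsonNilpotent A) : JacobsonNil A := by
  obtain ⟨n, -, hn⟩ := h
  refine fun x hx => ⟨n, ?_⟩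
  rw [← List.prod_replicate]
  exact hn _ List.length_replicate fun y hy => List.eq_of_mem_replicate hy ▸ hx

theorem isUnit_one_sub_mul_comm {a b : A} : IsUnit (1 - a * b) ↔ IsUnit (1 - b * a) := by
  simpa [spectrum.mem_iff] using
    (spectrum.unit_mem_mul_comm (R := ℤ) (a := a) (b := b) (r := 1)).not

/- `1 - x` has a left inverse `z`; then `z = 1 + z * x` with `z * x ∈ J(A)` has a left inverse
too, which forces it to be `1 - x`. -/
theorem isUnit_one_sub_of_mem_jacobson_bot {x : A} (hx : x ∈ (⊥ : Ideal A).jacobson) :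
    IsUnit (1 - x) := by
  obtain ⟨z, hz⟩ := Ideal.exists_mul_add_sub_mem_of_mem_jacobson (-x) (neg_mem hx)
  rw [Ideal.mem_bot, sub_eq_zero, neg_add_eq_sub] at hz
  obtain ⟨w, hw⟩ :=
    Ideal.exists_mul_add_sub_mem_of_mem_jacobson (z * x) (Ideal.mul_mem_left _ z hx)
  have hzx : z * x + 1 = z := by rw [← hz]; noncomm_ring
  rw [Ideal.mem_bot, sub_eq_zero, hzx] at hw
  have hw' : w = 1 - x := by
    calc w = w * (z * (1 - x)) := by rw [hz, mul_one]
      _ = 1 - x := by rw [← mul_assoc, hw, one_mul]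
  exact ⟨⟨1 - x, z, hw' ▸ hw, hz⟩, rfl⟩

theorem mem_jacobson_bot_iff_isUnit_one_sub_mul {x : A} :
    x ∈ (⊥ : Ideal A).jacobson ↔ ∀ y, IsUnit (1 - y * x) := by
  refine ⟨fun hx y => isUnit_one_sub_of_mem_jacobson_bot (Ideal.mul_mem_left _ y hx),
    fun h => Ideal.mem_jacobson_iff.2 fun y => ?_⟩
  obtain ⟨u, hu⟩ := h (-y)
  refine ⟨↑u⁻¹, Ideal.mem_bot.2 ?_⟩
  calc ↑u⁻¹ * y * x + ↑u⁻¹ - 1 = ↑u⁻¹ * (1 - -y * x) - 1 := by noncomm_ring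
    _ = 0 := by rw [← hu, Units.inv_mul, sub_self]

theorem mem_jacobson_bot_iff_isUnit_one_sub_mul' {x : A} :
    x ∈ (⊥ : Ideal A).jacobson ↔ ∀ y, IsUnit (1 - x * y) := by
  simp only [mem_jacobson_bot_iff_isUnit_one_sub_mul, isUnit_one_sub_mul_comm]

theorem unop_mem_jacobson_bot_iff {x : Aᵐᵒᵖ} :
    x.unop ∈ (⊥ : Ideal A).jacobson ↔ x ∈ (⊥ : Ideal Aᵐᵒᵖ).jacobson := by
  rw [mem_jacobson_bot_iff_isUnit_one_sub_mul', mem_jacobson_bot_iff_isUnit_one_sub_mul,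
    op_surjective.forall]
  refine forall_congr' fun y => ?_
  rw [← isUnit_op]
  simp

theorem IsIdempotentElem.map_eq_self {σ : A →+* A} (hσ : ∀ a b : A, a * b = 0 → a * σ b = 0)
    {e : A} (he : IsIdempotentElem e) : σ e = e := by
  have h₁ : e * σ (1 - e) = 0 := hσ e (1 - e) (by rw [mul_sub, mul_one, he.eq, sub_self])
  have h₂ : (1 - e) * σ e = 0 := hσ (1 - e) e (by rw [sub_mul, one_mul, he.eq, sub_self])
  rw [map_sub, map_one, mul_sub, mul_one, sub_eq_zero] at h₁
  rw [sub_mul, one_mul, sub_eq_zero] at h₂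
  rw [h₂, ← h₁]

theorem Ideal.mem_iff_mem_of_jacobson_le {M : Ideal A} (hJM : (⊥ : Ideal A).jacobson ≤ M)
    {e c x : A} (hec : e - c * x ∈ (⊥ : Ideal A).jacobson)
    (hxe : x - e * x ∈ (⊥ : Ideal A).jacobson) (hex : Commute e x) : x ∈ M ↔ e ∈ M := by
  refine ⟨fun hx => ?_, fun he => ?_⟩
  · rw [← sub_add_cancel e (c * x)]
    exact add_mem (hJM hec) (M.mul_mem_left c hx)
  · have h := add_mem (hJM hxe) (M.mul_mem_left x he)
    rwa [← hex.eq, sub_add_cancel] at h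

theorem Ideal.IsMaximal.mem_or_one_sub_mem {M : Ideal A} (hM : M.IsMaximal) {e : A}
    (he : IsIdempotentElem e) (he_central : ∀ a, e * a = a * e) : e ∈ M ∨ 1 - e ∈ M := by
  refine or_iff_not_imp_left.2 fun heM => ?_
  obtain ⟨y, i, hi, hyi⟩ := hM.exists_inv heM
  have h : 1 - e = (1 - e) * i :=
    calc 1 - e = (1 - e) * (y * e + i) := by rw [hyi, mul_one]
      _ = (1 - e) * i + (y * e - e * y * e) := by noncomm_ring
      _ = (1 - e) * i := by rw [he_central y, mul_assoc, he.eq, sub_self, add_zero]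
  rw [h]
  exact M.mul_mem_left _ hi

namespace IsAbelianRing

variable (hab : IsAbelianRing A) (hsr : IsSemiregularRing A)
include hab hsr

/- Lift the idempotent `c * x` of `A/J(A)`, where `c` is an inner inverse of `x` modulo `J(A)`;
the lift is central, so `x ≡ x * e = e * x`. -/
theorem exists_isIdempotentElem_sub_mem_jacobson (x : A) :
    ∃ e c : A, IsIdempotentElem e ∧ e - c * x ∈ (⊥ : Ideal A).jacobson ∧
      x - e * x ∈ (⊥ : Ideal A).jacobson := by
  obtain ⟨c, hc⟩ := hsr.1 x
  have hcx : c * x * (c * x) - c * x ∈ (⊥ : Ideal A).jacobson := by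
    have h : c * x * (c * x) - c * x = -(c * (x - x * c * x)) := by noncomm_ring
    rw [h]
    exact neg_mem (Ideal.mul_mem_left _ c hc)
  obtain ⟨e, he, hecx⟩ := hsr.2 _ hcx
  refine ⟨e, c, he, hecx, ?_⟩
  have h : x - e * x = (x - x * c * x) - x * (e - c * x) := by
    rw [hab e he x]; noncomm_ring
  rw [h]
  exact sub_mem hc (Ideal.mul_mem_left _ x hecx)

theorem mul_mem_iff_of_isMaximal {M : Ideal A} (hM : M.IsMaximal) (a b : A) :
    a * b ∈ M ↔ a ∈ M ∨ b ∈ M := by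
  have hJM : (⊥ : Ideal A).jacobson ≤ M := sInf_le ⟨bot_le, hM⟩
  obtain ⟨f, c, hf, hfc, haf⟩ := hab.exists_isIdempotentElem_sub_mem_jacobson hsr a
  have ha : a ∈ M ↔ f ∈ M := Ideal.mem_iff_mem_of_jacobson_le hJM hfc haf (hab f hf a)
  refine ⟨fun habM => ?_, ?_⟩
  · have hfb : f * b ∈ M := by
      rw [show f * b = (f - c * a) * b + c * (a * b) by noncomm_ring]
      exact add_mem (hJM (Ideal.mul_mem_right b _ hfc)) (M.mul_mem_left c habM)
    rcases hM.mem_or_one_sub_mem hf (hab f hf) with hfM | hfM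
    · exact .inl (ha.2 hfM)
    · refine .inr ?_
      rw [show b = f * b + b * (1 - f) by rw [hab f hf b]; noncomm_ring]
      exact add_mem hfb (M.mul_mem_left b hfM)
  · rintro (haM | hbM)
    · rw [show a * b = (a - f * a) * b + f * (a * b) by noncomm_ring, hab f hf (a * b)]
      exact add_mem (hJM (Ideal.mul_mem_right b _ haf)) (M.mul_mem_left _ (ha.1 haM))
    · exact M.mul_mem_left a hbM

theorem exists_sub_mul_sq_mem_jacobson (x : A) :
    ∃ c : A, x - c * x ^ 2 ∈ (⊥ : Ideal A).jacobson := by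
  obtain ⟨e, c, -, hec, hxe⟩ := hab.exists_isIdempotentElem_sub_mem_jacobson hsr x
  refine ⟨c, ?_⟩
  rw [show x - c * x ^ 2 = (x - e * x) + (e - c * x) * x by noncomm_ring]
  exact add_mem hxe (Ideal.mul_mem_right x _ hec)

theorem mem_jacobson_of_isNilpotent {x : A} (hx : IsNilpotent x) :
    x ∈ (⊥ : Ideal A).jacobson := by
  obtain ⟨c, hc⟩ := hab.exists_sub_mul_sq_mem_jacobson hsr x
  have hdesc : ∀ k : ℕ, x ^ (k + 1) ∈ (⊥ : Ideal A).jacobson → x ∈ (⊥ : Ideal A).jacobson := by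
    intro k
    induction k with
    | zero => simp
    | succ k ih =>
      intro hk
      refine ih ?_
      rw [show x ^ (k + 1) = (x - c * x ^ 2) * x ^ k + c * x ^ (k + 2) by
        rw [sub_mul, mul_assoc, ← pow_add, ← pow_succ', add_comm 2 k, sub_add_cancel]]
      exact add_mem (Ideal.mul_mem_right _ _ hc) (Ideal.mul_mem_left _ c hk)
  obtain ⟨n, hn⟩ := hx
  exact hdesc n (by rw [pow_succ, hn, zero_mul]; exact zero_mem _)

theorem map_mem_iff (hJ : JacobsonNil A) {σ : A →+* A}
    (hσ : ∀ e : A, IsIdempotentElem e → σ e = e) {M : Ideal A}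
    (hJM : (⊥ : Ideal A).jacobson ≤ M) (x : A) : σ x ∈ M ↔ x ∈ M := by
  have hσJ : ∀ y ∈ (⊥ : Ideal A).jacobson, σ y ∈ (⊥ : Ideal A).jacobson :=
    fun y hy => hab.mem_jacobson_of_isNilpotent hsr ((hJ y hy).map σ)
  obtain ⟨e, c, he, hec, hxe⟩ := hab.exists_isIdempotentElem_sub_mem_jacobson hsr x
  have hσe : σ e = e := hσ e he
  have hσec : e - σ c * σ x ∈ (⊥ : Ideal A).jacobson := by simpa [hσe] using hσJ _ hec
  have hσxe : σ x - e * σ x ∈ (⊥ : Ideal A).jacobson := by simpa [hσe] using hσJ _ hxe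
  exact (Ideal.mem_iff_mem_of_jacobson_le hJM hσec hσxe (hab e he _)).trans
    (Ideal.mem_iff_mem_of_jacobson_le hJM hec hxe (hab e he x)).symm

theorem mul_mem_iff_mul_map_mem (hJ : JacobsonNil A) {σ : A →+* A}
    (hσ : ∀ e : A, IsIdempotentElem e → σ e = e) {M : Ideal A} (hM : M.IsMaximal) (a b : A) :
    a * b ∈ M ↔ a * σ b ∈ M := by
  rw [hab.mul_mem_iff_of_isMaximal hsr hM, hab.mul_mem_iff_of_isMaximal hsr hM,
    hab.map_mem_iff hsr hJ hσ (sInf_le ⟨bot_le, hM⟩)]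

theorem mul_mem_iff_map_mul_mem (hJ : JacobsonNil A) {σ : A →+* A}
    (hσ : ∀ e : A, IsIdempotentElem e → σ e = e) {M : Ideal A} (hM : M.IsMaximal) (a b : A) :
    a * b ∈ M ↔ σ a * b ∈ M := by
  rw [hab.mul_mem_iff_of_isMaximal hsr hM, hab.mul_mem_iff_of_isMaximal hsr hM,
    hab.map_mem_iff hsr hJ hσ (sInf_le ⟨bot_le, hM⟩)]

end IsAbelianRing

theorem IsAbelianRing.op (h : IsAbelianRing A) : IsAbelianRing Aᵐᵒᵖ := fun e he a =>
  unop_injective (h e.unop (congrArg unop he) a.unop).symm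

theorem IsSemiregularRing.op (h : IsSemiregularRing A) : IsSemiregularRing Aᵐᵒᵖ := by
  refine ⟨fun a => ?_, fun a ha => ?_⟩
  · obtain ⟨b, hb⟩ := h.1 a.unop
    refine ⟨MulOpposite.op b, unop_mem_jacobson_bot_iff.1 ?_⟩
    simpa [mul_assoc] using hb
  · obtain ⟨e, he, hea⟩ := h.2 a.unop (unop_mem_jacobson_bot_iff.2 ha)
    exact ⟨MulOpposite.op e, congrArg MulOpposite.op he, unop_mem_jacobson_bot_iff.1 hea⟩

theorem JacobsonNil.op (h : JacobsonNil A) : JacobsonNil Aᵐᵒᵖ := fun x hx => by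
  obtain ⟨n, hn⟩ := h _ (unop_mem_jacobson_bot_iff.2 hx)
  exact ⟨n, unop_injective (by rw [unop_pow, hn, unop_zero])⟩

end

/-- Let `ω : S →* End(R)` be a monoid homomorphism with `R` `S`-compatible, abelian,
semi-regular, and `J(R)` nilpotent.  Then for every maximal right ideal `M` (viewed as a
maximal left ideal of `Rᵐᵒᵖ`), every `s ∈ S` and all `a b : R`, `a * b ∈ M ↔ a * ω s b ∈ M`;
likewise for every maximal left ideal of `R`. -/
theorem mem_maximal_iff_omega_mem_maximal (R S : Type*) [Ring R] [Monoid S]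
    (ω : S →* (R →+* R))
    (hcomp : ∀ (s : S) (a b : R), a * b = 0 ↔ a * (ω s b) = 0)
    (hab : IsAbelianRing R) (hsr : IsSemiregularRing R) (hnil : JacobsonNilpotent R) :
    (∀ M : Ideal Rᵐᵒᵖ, M.IsMaximal → ∀ (s : S) (a b : R),
      MulOpposite.op (a * b) ∈ M ↔ MulOpposite.op (a * ω s b) ∈ M) ∧
    (∀ M : Ideal R, M.IsMaximal → ∀ (s : S) (a b : R),
      a * b ∈ M ↔ a * ω s b ∈ M) := by
  have hfix : ∀ (s : S) (e : R), IsIdempotentElem e → ω s e = e :=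
    fun s e he => he.map_eq_self fun a b => (hcomp s a b).1
  refine ⟨fun M hM s a b => ?_, fun M hM s a b =>
    hab.mul_mem_iff_mul_map_mem hsr hnil.jacobsonNil (hfix s) hM a b⟩
  have hfix_op (e : Rᵐᵒᵖ) (he : IsIdempotentElem e) : RingHom.op (ω s) e = e :=
    unop_injective (hfix s e.unop (congrArg unop he))
  exact hab.op.mul_mem_iff_map_mul_mem hsr.op hnil.jacobsonNil.op hfix_op hM (op b) (op a)
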